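/- arXiv:2503.12038 — 7 statements merged into one kernel-verified Lean document; each statement's English description precedes it below -/
import Mathlib

section
/- Let n ≥ 1 and let T : ℂ → Matrix (Fin n) (Fin n) ℂ. Let a, b ∈ ℂ with a.re ≤ b.re and a.im ≤ b.im, and let R = [a.re, b.re] × [a.im, b.im] be the corresponding closed rectangle in ℂ. Assume T is continuous on R, ℂ-differentiable at every point of the open rectangle (a.re, b.re) × (a.im, b.im), and T(ξ) is an invertible matrix for every ξ ∈ R. Then for every vector z ∈ ℂⁿ, the counterclockwise rectangle boundary integral of the function ξ ↦ T(ξ)⁻¹ ·ᵥ z over the rectangle with opposite corners a and b equals 0. (This is the claim underlying the recursive integral method: the zeroth moment vanishes when the region contains no eigenvalue of T.) -/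
open Complex MeasureTheory Matrix intervalIntegral

attribute [local instance] Matrix.normedAddCommGroup Matrix.normedSpace

private lemma det_differentiableAt {n : ℕ} {f : ℂ → Matrix (Fin n) (Fin n) ℂ} {x : ℂ}
    (h : ∀ i j, DifferentiableAt ℂ (fun ξ => f ξ i j) x) :
    DifferentiableAt ℂ (fun ξ => (f ξ).det) x := by
  simp only [Matrix.det_apply']
  exact DifferentiableAt.fun_sum fun σ _ =>
    ((DifferentiableAt.fun_finsetProd fun i _ => h _ _).const_mul _)

/-- The zeroth moment of `ξ ↦ T ξ⁻¹ ·ᵥ z` over the boundary of a rectangle containing no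
eigenvalue of `T` vanishes. -/
theorem rectangle_integral_inv_mulVec_eq_zero
    (n : ℕ) (hn : 1 ≤ n) (T : ℂ → Matrix (Fin n) (Fin n) ℂ)
    (a b : ℂ) (hre : a.re ≤ b.re) (him : a.im ≤ b.im)
    (hcont : ContinuousOn T (Set.Icc a.re b.re ×ℂ Set.Icc a.im b.im))
    (hdiff : ∀ ξ ∈ Set.Ioo a.re b.re ×ℂ Set.Ioo a.im b.im, DifferentiableAt ℂ T ξ)
    (hinv : ∀ ξ ∈ Set.Icc a.re b.re ×ℂ Set.Icc a.im b.im, IsUnit (T ξ))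
    (z : Fin n → ℂ) :
    (∫ x : ℝ in a.re..b.re, (T ((x : ℂ) + a.im * Complex.I))⁻¹ *ᵥ z) +
      Complex.I • (∫ y : ℝ in a.im..b.im, (T ((b.re : ℂ) + y * Complex.I))⁻¹ *ᵥ z) -
      (∫ x : ℝ in a.re..b.re, (T ((x : ℂ) + b.im * Complex.I))⁻¹ *ᵥ z) -
      Complex.I • (∫ y : ℝ in a.im..b.im, (T ((a.re : ℂ) + y * Complex.I))⁻¹ *ᵥ z) = 0 := by
  set R : Set ℂ := Set.Icc a.re b.re ×ℂ Set.Icc a.im b.im with hR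
  -- determinant is nonzero on R
  have hdet : ∀ ξ ∈ R, (T ξ).det ≠ 0 := fun ξ hξ => by
    have := (hinv ξ hξ).map (Matrix.detMonoidHom (n := Fin n) (R := ℂ))
    simpa [isUnit_iff_ne_zero] using this
  -- rewrite the inverse
  have hrw : ∀ ξ, (T ξ)⁻¹ *ᵥ z = ((T ξ).det)⁻¹ • ((T ξ).adjugate *ᵥ z) := fun ξ => by
    rw [Matrix.inv_def, Matrix.smul_mulVec, Ring.inverse_eq_inv']
  set f : ℂ → Fin n → ℂ := fun ξ => ((T ξ).det)⁻¹ • ((T ξ).adjugate *ᵥ z) with hf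
  -- continuity of f on R
  have hcd : ContinuousOn (fun ξ => (T ξ).det) R :=
    (Continuous.matrix_det continuous_id).comp_continuousOn hcont
  have hcf : ContinuousOn f R := by
    apply ContinuousOn.smul (hcd.inv₀ hdet)
    exact ((Continuous.matrix_adjugate continuous_id).matrix_mulVec
      continuous_const).comp_continuousOn hcont
  -- differentiability of f on the open rectangle
  have hdf : ∀ ξ ∈ Set.Ioo a.re b.re ×ℂ Set.Ioo a.im b.im, DifferentiableAt ℂ f ξ := by
    intro ξ hξ
    have hR' : ξ ∈ R := by
      refine ⟨Set.Ioo_subset_Icc_self hξ.1, Set.Ioo_subset_Icc_self hξ.2⟩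
    have hTij : ∀ i j, DifferentiableAt ℂ (fun ξ => T ξ i j) ξ := by
      intro i j
      have h1 := (differentiableAt_pi (𝕜 := ℂ)).mp (hdiff ξ hξ) i
      exact (differentiableAt_pi (𝕜 := ℂ)).mp h1 j
    have hdetd : DifferentiableAt ℂ (fun ξ => (T ξ).det) ξ := det_differentiableAt hTij
    have hadj : ∀ i j, DifferentiableAt ℂ (fun ξ => (T ξ).adjugate i j) ξ := by
      intro i j
      simp only [Matrix.adjugate_apply]
      apply det_differentiableAt
      intro k l
      simp only [Matrix.updateRow_apply]
      by_cases hk : k = j <;> simp [hk, hTij]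
    refine DifferentiableAt.smul (hdetd.inv (hdet ξ hR')) ?_
    rw [differentiableAt_pi (𝕜 := ℂ)]
    intro i
    simp only [Matrix.mulVec, dotProduct]
    exact DifferentiableAt.fun_sum fun j _ => (hadj i j).mul_const _
  -- apply Cauchy–Goursat for rectangles
  have key := Complex.integral_boundary_rect_eq_zero_of_continuousOn_of_differentiableOn f a b
    (by
      rw [Set.uIcc_of_le hre, Set.uIcc_of_le him]
      exact hcf)
    (by
      rw [min_eq_left hre, max_eq_right hre, min_eq_left him, max_eq_right him]
      exact fun ξ hξ => (hdf ξ hξ).differentiableWithinAt)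
  simp only [hrw]
  show (∫ x : ℝ in a.re..b.re, f ((x : ℂ) + a.im * Complex.I)) +
      Complex.I • (∫ y : ℝ in a.im..b.im, f ((b.re : ℂ) + y * Complex.I)) -
      (∫ x : ℝ in a.re..b.re, f ((x : ℂ) + b.im * Complex.I)) -
      Complex.I • (∫ y : ℝ in a.im..b.im, f ((a.re : ℂ) + y * Complex.I)) = 0
  rw [← key]
  abel
end

section
/- Let n ≥ 1 and let T : ℂ → Matrix (Fin n) (Fin n) ℂ. Let a, b ∈ ℂ with a.re ≤ b.re and a.im ≤ b.im, and let R = [a.re, b.re] × [a.im, b.im] be the corresponding closed rectangle in ℂ. Assume T is continuous on R, ℂ-differentiable at every point of the open rectangle (a.re, b.re) × (a.im, b.im), and T(ξ) is an invertible matrix for every ξ ∈ R. Then for every vector z ∈ ℂⁿ, the counterclockwise rectangle boundary integral of the function ξ ↦ ξ • (T(ξ)⁻¹ ·ᵥ z) over the rectangle with opposite corners a and b equals 0. (This is the vanishing of the first moment used by Beyn's method when the region contains no eigenvalue of T.) -/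
open Complex MeasureTheory Matrix intervalIntegral

attribute [local instance] Matrix.normedAddCommGroup Matrix.normedSpace

section aux

variable {n : ℕ}

lemma aux_entry_diff {A : ℂ → Matrix (Fin n) (Fin n) ℂ} {ξ : ℂ}
    (h : DifferentiableAt ℂ A ξ) (i j : Fin n) :
    DifferentiableAt ℂ (fun ξ => A ξ i j) ξ := by
  have h1 : DifferentiableAt ℂ (fun ξ => A ξ i) ξ := (differentiableAt_pi.1 h) i
  exact (differentiableAt_pi.1 h1) j

lemma aux_det_diff {A : ℂ → Matrix (Fin n) (Fin n) ℂ} {ξ : ℂ}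
    (h : DifferentiableAt ℂ A ξ) :
    DifferentiableAt ℂ (fun ξ => (A ξ).det) ξ := by
  simp only [Matrix.det_apply, Units.smul_def, zsmul_eq_mul]
  exact DifferentiableAt.fun_sum fun σ _ =>
    (differentiableAt_const _).mul
      (DifferentiableAt.fun_finsetProd fun i _ => aux_entry_diff h (σ i) i)

lemma aux_adjugate_diff {A : ℂ → Matrix (Fin n) (Fin n) ℂ} {ξ : ℂ}
    (h : DifferentiableAt ℂ A ξ) :
    DifferentiableAt ℂ (fun ξ => (A ξ).adjugate) ξ := by
  apply differentiableAt_pi.2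
  intro i
  apply differentiableAt_pi.2
  intro j
  simp only [Matrix.adjugate_apply]
  apply aux_det_diff
  apply differentiableAt_pi.2
  intro a
  apply differentiableAt_pi.2
  intro b
  rcases eq_or_ne a j with rfl | ha
  · simp only [Matrix.updateRow_self]
    exact differentiableAt_const _
  · simp only [Matrix.updateRow_ne ha]
    exact aux_entry_diff h a b

end aux

/-- The first moment of `ξ ↦ ξ • (T ξ⁻¹ ·ᵥ z)` over the boundary of a rectangle containing no
eigenvalue of `T` vanishes. -/
theorem rectangle_integral_smul_inv_mulVec_eq_zero
    (n : ℕ) (hn : 1 ≤ n) (T : ℂ → Matrix (Fin n) (Fin n) ℂ)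
    (a b : ℂ) (hre : a.re ≤ b.re) (him : a.im ≤ b.im)
    (hcont : ContinuousOn T (Set.Icc a.re b.re ×ℂ Set.Icc a.im b.im))
    (hdiff : ∀ ξ ∈ Set.Ioo a.re b.re ×ℂ Set.Ioo a.im b.im, DifferentiableAt ℂ T ξ)
    (hinv : ∀ ξ ∈ Set.Icc a.re b.re ×ℂ Set.Icc a.im b.im, IsUnit (T ξ))
    (z : Fin n → ℂ) :
    (∫ x : ℝ in a.re..b.re,
        ((x : ℂ) + a.im * Complex.I) • ((T ((x : ℂ) + a.im * Complex.I))⁻¹ *ᵥ z)) +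
      Complex.I • (∫ y : ℝ in a.im..b.im,
        ((b.re : ℂ) + y * Complex.I) • ((T ((b.re : ℂ) + y * Complex.I))⁻¹ *ᵥ z)) -
      (∫ x : ℝ in a.re..b.re,
        ((x : ℂ) + b.im * Complex.I) • ((T ((x : ℂ) + b.im * Complex.I))⁻¹ *ᵥ z)) -
      Complex.I • (∫ y : ℝ in a.im..b.im,
        ((a.re : ℂ) + y * Complex.I) • ((T ((a.re : ℂ) + y * Complex.I))⁻¹ *ᵥ z)) = 0 := by
  set R : Set ℂ := Set.Icc a.re b.re ×ℂ Set.Icc a.im b.im with hR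
  set f : ℂ → Fin n → ℂ := fun ξ => ξ • ((T ξ)⁻¹ *ᵥ z) with hf
  have hdet : ∀ ξ ∈ R, (T ξ).det ≠ 0 := fun ξ hξ =>
    ((Matrix.isUnit_iff_isUnit_det _).1 (hinv ξ hξ)).ne_zero
  -- continuity
  have hcdet : ContinuousOn (fun ξ => (T ξ).det) R :=
    (Continuous.matrix_det continuous_id).comp_continuousOn hcont
  have hcadj : ContinuousOn (fun ξ => (T ξ).adjugate) R :=
    (Continuous.matrix_adjugate continuous_id).comp_continuousOn hcont
  have hcinv : ContinuousOn (fun ξ => (T ξ)⁻¹) R := by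
    have : ContinuousOn (fun ξ => ((T ξ).det)⁻¹ • (T ξ).adjugate) R :=
      (hcdet.inv₀ hdet).smul hcadj
    refine this.congr fun ξ _ => ?_
    rw [Matrix.inv_def, Ring.inverse_eq_inv']
  have hcf : ContinuousOn f R :=
    continuousOn_id.smul
      ((Continuous.matrix_mulVec continuous_id continuous_const).comp_continuousOn hcinv)
  -- differentiability
  have hdf : ∀ ξ ∈ Set.Ioo a.re b.re ×ℂ Set.Ioo a.im b.im, DifferentiableAt ℂ f ξ := by
    intro ξ hξ
    have hξR : ξ ∈ R := by
      refine ⟨Set.Ioo_subset_Icc_self hξ.1, Set.Ioo_subset_Icc_self hξ.2⟩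
    have hT := hdiff ξ hξ
    have hdinv : DifferentiableAt ℂ (fun ξ => (T ξ)⁻¹) ξ := by
      have : DifferentiableAt ℂ (fun ξ => ((T ξ).det)⁻¹ • (T ξ).adjugate) ξ :=
        ((aux_det_diff hT).inv (hdet ξ hξR)).smul (aux_adjugate_diff hT)
      refine this.congr_of_eventuallyEq ?_
      filter_upwards with ξ
      rw [Matrix.inv_def, Ring.inverse_eq_inv']
    have hmv : DifferentiableAt ℂ (fun ξ => (T ξ)⁻¹ *ᵥ z) ξ := by
      apply differentiableAt_pi.2
      intro i
      simp only [Matrix.mulVec, dotProduct]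
      exact DifferentiableAt.fun_sum fun j _ =>
        (aux_entry_diff hdinv i j).mul (differentiableAt_const _)
    exact differentiableAt_id.smul hmv
  have H := integral_boundary_rect_eq_zero_of_continuousOn_of_differentiableOn f a b
    (by rwa [Set.uIcc_of_le hre, Set.uIcc_of_le him]) ?_
  · rw [← H]; abel
  · intro ξ hξ
    apply (hdf ξ ?_).differentiableWithinAt
    rwa [min_eq_left hre, max_eq_right hre, min_eq_left him, max_eq_right him] at hξ
end

section
/- Let n, k ≥ 1 and suppose T : ℂ → Matrix (Fin n) (Fin n) ℂ has Keldysh form on the disk D(c, r) with data (U, H, λ, v, w). Then (1/(2πi)) · ∮_{|ξ−c|=r} T(ξ)⁻¹ dξ = Σ_{i=1}^{k} v_i w_iᴴ. That is, the zeroth contour moment of T⁻¹ over the circle of radius r about c equals the sum of the outer products v_i w_iᴴ associated with the eigenvalues λ_i enclosed by the circle. -/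
open Complex MeasureTheory Matrix

attribute [local instance] Matrix.normedAddCommGroup Matrix.normedSpace

lemma circleIntegral_add' {E : Type*} [NormedAddCommGroup E] [NormedSpace ℂ E]
    {f g : ℂ → E} {c : ℂ} {R : ℝ} (hf : CircleIntegrable f c R)
    (hg : CircleIntegrable g c R) :
    (∮ z in C(c, R), f z + g z) = (∮ z in C(c, R), f z) + ∮ z in C(c, R), g z := by
  simp only [circleIntegral, smul_add, intervalIntegral.integral_add hf.out hg.out]

lemma circleIntegral_finset_sum {E : Type*} [NormedAddCommGroup E] [NormedSpace ℂ E]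
    {ι : Type*} (s : Finset ι) (f : ι → ℂ → E) {c : ℂ} {R : ℝ}
    (h : ∀ i ∈ s, CircleIntegrable (f i) c R) :
    (∮ z in C(c, R), ∑ i ∈ s, f i z) = ∑ i ∈ s, ∮ z in C(c, R), f i z := by
  simp only [circleIntegral, Finset.smul_sum]
  exact intervalIntegral.integral_finset_sum fun i hi => (h i hi).out

/-- If `T` has Keldysh form on the disk `D(c, r)` with data `(U, H, lam, v, w)`, then the zeroth
contour moment of `T⁻¹` over the circle `|ξ - c| = r` equals `∑ i, v i (w i)ᴴ`. -/
theorem circleIntegral_inv_eq_sum_vecMulVec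
    (n k : ℕ) (hn : 1 ≤ n) (hk : 1 ≤ k)
    (T H : ℂ → Matrix (Fin n) (Fin n) ℂ) (c : ℂ) (r : ℝ) (hr : 0 < r)
    (U : Set ℂ) (hU : IsOpen U) (hUc : Metric.closedBall c r ⊆ U)
    (hH : DifferentiableOn ℂ H U)
    (lam : Fin k → ℂ) (hlam_inj : Function.Injective lam)
    (hlam_mem : ∀ i, lam i ∈ Metric.ball c r)
    (v w : Fin k → Fin n → ℂ)
    (hT : ∀ ξ ∈ U, ξ ∉ Set.range lam →
      IsUnit (T ξ) ∧
      (T ξ)⁻¹ = H ξ +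
        ∑ i, (ξ - lam i)⁻¹ • Matrix.vecMulVec (v i) (fun q => (starRingEnd ℂ) (w i q))) :
    (2 * (Real.pi : ℂ) * Complex.I)⁻¹ • (∮ ξ in C(c, r), (T ξ)⁻¹) =
      ∑ i, Matrix.vecMulVec (v i) (fun q => (starRingEnd ℂ) (w i q)) := by
  set M : Fin k → Matrix (Fin n) (Fin n) ℂ :=
    fun i => Matrix.vecMulVec (v i) (fun q => (starRingEnd ℂ) (w i q)) with hM
  -- points on the sphere are not in the range of lam
  have hsph_nr : ∀ ξ ∈ Metric.sphere c r, ξ ∉ Set.range lam := by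
    intro ξ hξ hmem
    rcases hmem with ⟨i, rfl⟩
    have := hlam_mem i
    rw [Metric.mem_ball] at this
    rw [Metric.mem_sphere] at hξ
    exact absurd hξ (ne_of_lt this)
  have hsub : Metric.sphere c r ⊆ U := fun ξ hξ =>
    hUc (Metric.sphere_subset_closedBall hξ)
  have heq : Set.EqOn (fun ξ => (T ξ)⁻¹)
      (fun ξ => H ξ + ∑ i, (ξ - lam i)⁻¹ • M i) (Metric.sphere c r) := by
    intro ξ hξ
    exact (hT ξ (hsub hξ) (hsph_nr ξ hξ)).2
  have hHint : CircleIntegrable H c r :=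
    ContinuousOn.circleIntegrable hr.le ((hH.continuousOn).mono hsub)
  have hfint : ∀ i : Fin k, CircleIntegrable (fun ξ => (ξ - lam i)⁻¹ • M i) c r := by
    intro i
    apply ContinuousOn.circleIntegrable hr.le
    apply ContinuousOn.smul (f := fun ξ => (ξ - lam i)⁻¹) (g := fun _ => M i) _ continuousOn_const
    apply ContinuousOn.inv₀ (by fun_prop)
    intro ξ hξ
    exact sub_ne_zero.2 (fun h => hsph_nr ξ hξ ⟨i, h.symm⟩)
  have hsum_int : CircleIntegrable (fun ξ => ∑ i, (ξ - lam i)⁻¹ • M i) c r := by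
    have : CircleIntegrable (fun ξ => ∑ i ∈ (Finset.univ : Finset (Fin k)),
        (ξ - lam i)⁻¹ • M i) c r := by
      induction (Finset.univ : Finset (Fin k)) using Finset.induction with
      | empty => simpa using circleIntegrable_const (0 : Matrix (Fin n) (Fin n) ℂ) c r
      | insert _ _ hnot ih =>
        simp only [Finset.sum_insert hnot]
        exact (hfint _).add ih
    exact this
  have hHzero : (∮ ξ in C(c, r), H ξ) = 0 := by
    apply Complex.circleIntegral_eq_zero_of_differentiable_on_off_countable hr.le
      Set.countable_empty ((hH.continuousOn).mono hUc)
    intro z hz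
    exact hH.differentiableAt (hU.mem_nhds (hUc (Metric.ball_subset_closedBall hz.1)))
  have hterm : ∀ i : Fin k,
      (∮ ξ in C(c, r), (ξ - lam i)⁻¹ • M i) = (2 * (Real.pi : ℂ) * Complex.I) • M i := by
    intro i
    rw [circleIntegral.integral_smul_const,
      circleIntegral.integral_sub_inv_of_mem_ball (hlam_mem i)]
  have key : (∮ ξ in C(c, r), (T ξ)⁻¹)
      = (2 * (Real.pi : ℂ) * Complex.I) • ∑ i, M i := by
    rw [circleIntegral.integral_congr hr.le heq,
      circleIntegral_add' hHint hsum_int, hHzero, zero_add,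
      circleIntegral_finset_sum _ _ (fun i _ => hfint i)]
    rw [Finset.smul_sum]
    exact Finset.sum_congr rfl fun i _ => hterm i
  rw [key, smul_smul, inv_mul_cancel₀, one_smul]
  simp [Real.pi_ne_zero, Complex.I_ne_zero]
end

section
/- Let n, k, l ≥ 1, let V : Matrix (Fin n) (Fin k) ℂ have rank k, let S : Matrix (Fin k) (Fin l) ℂ, and let Λ : Matrix (Fin k) (Fin k) ℂ be the diagonal matrix with diagonal entries λ_1, …, λ_k ∈ ℂ. Set M₀ = V * S and M₁ = V * Λ * S. Suppose M₀ = V₀ * Σ₀ * W₀ᴴ, where V₀ : Matrix (Fin n) (Fin k) ℂ satisfies V₀ᴴ * V₀ = 1, W₀ : Matrix (Fin l) (Fin k) ℂ satisfies W₀ᴴ * W₀ = 1, and Σ₀ : Matrix (Fin k) (Fin k) ℂ is invertible. Then the matrix Q := S * W₀ * Σ₀⁻¹ is invertible and V₀ᴴ * M₁ * W₀ * Σ₀⁻¹ = Q⁻¹ * Λ * Q. In particular, the matrix B := V₀ᴴ * M₁ * W₀ * Σ₀⁻¹ is similar to Λ, so its spectrum is exactly {λ_1, …, λ_k}. (This is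 the linear-algebra core of Beyn's method: the eigenvalues are recovered from the truncated SVD of the zeroth moment.) -/
open Matrix
set_option maxHeartbeats 1000000

/-- The linear-algebra core of Beyn's method: with `M₀ = V * S` and `M₁ = V * Λ * S`, given a
truncated SVD `M₀ = V₀ * Sig₀ * W₀ᴴ`, the matrix `Q = S * W₀ * Sig₀⁻¹` is invertible,
`V₀ᴴ * M₁ * W₀ * Sig₀⁻¹ = Q⁻¹ * Λ * Q`, and hence its spectrum is `{λ_1, …, λ_k}`. -/
theorem beyn_reduced_matrix_similar_to_diagonal
    (n k l : ℕ) (hn : 1 ≤ n) (hk : 1 ≤ k) (hl : 1 ≤ l)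
    (V : Matrix (Fin n) (Fin k) ℂ) (hV : V.rank = k)
    (S : Matrix (Fin k) (Fin l) ℂ) (lam : Fin k → ℂ)
    (V₀ : Matrix (Fin n) (Fin k) ℂ) (W₀ : Matrix (Fin l) (Fin k) ℂ)
    (Sig₀ : Matrix (Fin k) (Fin k) ℂ)
    (hSVD : V * S = V₀ * Sig₀ * W₀.conjTranspose)
    (hV₀ : V₀.conjTranspose * V₀ = 1)
    (hW₀ : W₀.conjTranspose * W₀ = 1)
    (hSig₀ : IsUnit Sig₀) :
    IsUnit (S * W₀ * Sig₀⁻¹) ∧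
    V₀.conjTranspose * (V * Matrix.diagonal lam * S) * W₀ * Sig₀⁻¹ =
      (S * W₀ * Sig₀⁻¹)⁻¹ * Matrix.diagonal lam * (S * W₀ * Sig₀⁻¹) ∧
    spectrum ℂ (V₀.conjTranspose * (V * Matrix.diagonal lam * S) * W₀ * Sig₀⁻¹) =
      Set.range lam := by
  set Q := S * W₀ * Sig₀⁻¹ with hQ
  clear_value Q
  have key : V₀.conjTranspose * V * Q = 1 := by
    have : V₀.conjTranspose * (V * S) * W₀ * Sig₀⁻¹ = 1 := by
      rw [hSVD, ← Matrix.mul_assoc, ← Matrix.mul_assoc, hV₀, Matrix.one_mul,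
        Matrix.mul_assoc Sig₀, Matrix.mul_assoc Sig₀, hW₀, Matrix.one_mul,
        Matrix.mul_nonsing_inv _ (isUnit_iff_isUnit_det _ |>.mp hSig₀)]
    calc V₀.conjTranspose * V * Q = V₀.conjTranspose * (V * S) * W₀ * Sig₀⁻¹ := by
          simp only [hQ, Matrix.mul_assoc]
      _ = 1 := this
  have hQunit : IsUnit Q := by rw [mul_eq_one_comm] at key; exact (Matrix.isUnit_iff_isUnit_det _).mpr (Matrix.isUnit_det_of_right_inverse key)
  have hQinv : Q⁻¹ = V₀.conjTranspose * V := Matrix.inv_eq_left_inv key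
  have heq : V₀.conjTranspose * (V * Matrix.diagonal lam * S) * W₀ * Sig₀⁻¹ =
      Q⁻¹ * Matrix.diagonal lam * Q := by
    rw [hQinv]; simp only [hQ, Matrix.mul_assoc]
  refine ⟨hQunit, heq, ?_⟩
  rw [heq]
  obtain ⟨u, hu⟩ := hQunit
  rw [← hu, ← Matrix.coe_units_inv, spectrum.units_conjugate', spectrum_diagonal]
end

section
/- Let n, k, l ≥ 1, let V : Matrix (Fin n) (Fin k) ℂ have rank k, let S : Matrix (Fin k) (Fin l) ℂ, and let Λ : Matrix (Fin k) (Fin k) ℂ be the diagonal matrix with diagonal entries λ_1, …, λ_k ∈ ℂ. Set M₀ = V * S. Suppose M₀ = V₀ * Σ₀ * W₀ᴴ, where V₀ : Matrix (Fin n) (Fin k) ℂ satisfies V₀ᴴ * V₀ = 1, W₀ : Matrix (Fin l) (Fin k) ℂ satisfies W₀ᴴ * W₀ = 1, and Σ₀ : Matrix (Fin k) (Fin k) ℂ is invertible. Then, with Q := S * W₀ * Σ₀⁻¹, the matrix Q is invertible and V = V₀ * Q⁻¹. (This is the eigenvector-recovery step of Beyn's method: the columns of V₀ multiplied by the eigenvector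 matrix Q⁻¹ of the reduced problem recover the original eigenvectors, i.e., the columns of V.) -/
open Matrix

/-- The eigenvector-recovery step of Beyn's method: with `M₀ = V * S` and a truncated SVD
`M₀ = V₀ * Sig₀ * W₀ᴴ`, the matrix `Q = S * W₀ * Sig₀⁻¹` is invertible and `V = V₀ * Q⁻¹`. -/
theorem beyn_eigenvector_recovery
    (n k l : ℕ) (hn : 1 ≤ n) (hk : 1 ≤ k) (hl : 1 ≤ l)
    (V : Matrix (Fin n) (Fin k) ℂ) (hV : V.rank = k)
    (S : Matrix (Fin k) (Fin l) ℂ) (lam : Fin k → ℂ)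
    (V₀ : Matrix (Fin n) (Fin k) ℂ) (W₀ : Matrix (Fin l) (Fin k) ℂ)
    (Sig₀ : Matrix (Fin k) (Fin k) ℂ)
    (hSVD : V * S = V₀ * Sig₀ * W₀.conjTranspose)
    (hV₀ : V₀.conjTranspose * V₀ = 1)
    (hW₀ : W₀.conjTranspose * W₀ = 1)
    (hSig₀ : IsUnit Sig₀) :
    IsUnit (S * W₀ * Sig₀⁻¹) ∧ V = V₀ * (S * W₀ * Sig₀⁻¹)⁻¹ := by
  have hdet : IsUnit Sig₀.det := (Matrix.isUnit_iff_isUnit_det _).mp hSig₀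
  have hVQ : V * (S * W₀ * Sig₀⁻¹) = V₀ := by
    calc V * (S * W₀ * Sig₀⁻¹) = V * S * W₀ * Sig₀⁻¹ := by simp only [Matrix.mul_assoc]
    _ = V₀ * Sig₀ * W₀.conjTranspose * W₀ * Sig₀⁻¹ := by rw [hSVD]
    _ = V₀ * (Sig₀ * ((W₀.conjTranspose * W₀) * Sig₀⁻¹)) := by simp only [Matrix.mul_assoc]
    _ = V₀ := by rw [hW₀, Matrix.one_mul, Matrix.mul_nonsing_inv _ hdet, Matrix.mul_one]
  have hinj : Function.Injective (S * W₀ * Sig₀⁻¹).mulVec := by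
    intro x y hxy
    have h1 : V₀.mulVec x = V₀.mulVec y := by
      rw [← hVQ]; simp only [← Matrix.mulVec_mulVec, hxy]
    have h2 : (V₀.conjTranspose * V₀).mulVec x = (V₀.conjTranspose * V₀).mulVec y := by
      rw [← Matrix.mulVec_mulVec, ← Matrix.mulVec_mulVec, h1]
    simpa [hV₀] using h2
  have hQ : IsUnit (S * W₀ * Sig₀⁻¹) := Matrix.mulVec_injective_iff_isUnit.mp hinj
  refine ⟨hQ, ?_⟩
  have hQdet : IsUnit (S * W₀ * Sig₀⁻¹).det := (Matrix.isUnit_iff_isUnit_det _).mp hQ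
  calc V = V * ((S * W₀ * Sig₀⁻¹) * (S * W₀ * Sig₀⁻¹)⁻¹) := by
        rw [Matrix.mul_nonsing_inv _ hQdet, Matrix.mul_one]
    _ = V * (S * W₀ * Sig₀⁻¹) * (S * W₀ * Sig₀⁻¹)⁻¹ := by rw [← Matrix.mul_assoc]
    _ = V₀ * (S * W₀ * Sig₀⁻¹)⁻¹ := by rw [hVQ]
end

section
/- Let f : ℂ → E be a function into a complex Banach space E, let a, b ∈ ℂ with a.re < b.re and a.im < b.im, and let c ∈ ℂ with a.re < c.re < b.re and a.im < c.im < b.im. Assume f is continuous on the closed rectangle [a.re, b.re] × [a.im, b.im]. Then the counterclockwise rectangle boundary integral of f over the rectangle with opposite corners a and b equals the sum of the counterclockwise rectangle boundary integrals of f over the four subrectangles with opposite corners (a, c), (c.re + a.im·I, b.re + c.im·I), (a.re + c.im·I, c.re + b.im·I), and (c, b), respectively: the integrals over the interior edges cancel. (This additivity under cross-shaped partitioning is what makes the recursive region-partitioning of contour integrals consistent.) -/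
open Complex MeasureTheory intervalIntegral

/-- The counterclockwise boundary integral of `f` over the rectangle with opposite corners
`a` and `b`. -/
noncomputable def rectangleIntegral {E : Type*} [NormedAddCommGroup E] [NormedSpace ℂ E]
    (f : ℂ → E) (a b : ℂ) : E :=
  (∫ x : ℝ in a.re..b.re, f ((x : ℂ) + a.im * Complex.I)) +
    Complex.I • (∫ y : ℝ in a.im..b.im, f ((b.re : ℂ) + y * Complex.I)) -
    (∫ x : ℝ in a.re..b.re, f ((x : ℂ) + b.im * Complex.I)) -
    Complex.I • (∫ y : ℝ in a.im..b.im, f ((a.re : ℂ) + y * Complex.I))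

/-- Additivity of the rectangle boundary integral under a cross-shaped partition at an interior
point `c`: the integrals over the interior edges cancel. -/
theorem rectangleIntegral_cross_partition
    {E : Type*} [NormedAddCommGroup E] [NormedSpace ℂ E] (f : ℂ → E)
    (a b c : ℂ) (hre : a.re < b.re) (him : a.im < b.im)
    (hcre : a.re < c.re ∧ c.re < b.re) (hcim : a.im < c.im ∧ c.im < b.im)
    (hcont : ContinuousOn f (Set.Icc a.re b.re ×ℂ Set.Icc a.im b.im)) :
    rectangleIntegral f a b =
      rectangleIntegral f a c +
      rectangleIntegral f ((c.re : ℂ) + a.im * Complex.I) ((b.re : ℂ) + c.im * Complex.I) +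
      rectangleIntegral f ((a.re : ℂ) + c.im * Complex.I) ((c.re : ℂ) + b.im * Complex.I) +
      rectangleIntegral f c b := by
  have har : a.re ∈ Set.Icc a.re b.re := ⟨le_refl _, hre.le⟩
  have hbr : b.re ∈ Set.Icc a.re b.re := ⟨hre.le, le_refl _⟩
  have hcr : c.re ∈ Set.Icc a.re b.re := ⟨hcre.1.le, hcre.2.le⟩
  have hai : a.im ∈ Set.Icc a.im b.im := ⟨le_refl _, him.le⟩
  have hbi : b.im ∈ Set.Icc a.im b.im := ⟨him.le, le_refl _⟩
  have hci : c.im ∈ Set.Icc a.im b.im := ⟨hcim.1.le, hcim.2.le⟩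
  have keyH : ∀ p q y : ℝ, p ∈ Set.Icc a.re b.re → q ∈ Set.Icc a.re b.re →
      y ∈ Set.Icc a.im b.im →
      IntervalIntegrable (fun x : ℝ => f ((x : ℂ) + y * Complex.I)) volume p q := by
    intro p q y hp hq hy
    apply ContinuousOn.intervalIntegrable
    apply hcont.comp (by fun_prop)
    intro x hx
    rw [Complex.mem_reProdIm]
    constructor
    · simpa using Set.uIcc_subset_Icc hp hq hx
    · simpa using hy
  have keyV : ∀ p q x : ℝ, p ∈ Set.Icc a.im b.im → q ∈ Set.Icc a.im b.im →
      x ∈ Set.Icc a.re b.re →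
      IntervalIntegrable (fun y : ℝ => f ((x : ℂ) + y * Complex.I)) volume p q := by
    intro p q x hp hq hx
    apply ContinuousOn.intervalIntegrable
    apply hcont.comp (by fun_prop)
    intro y hy
    rw [Complex.mem_reProdIm]
    constructor
    · simpa using hx
    · simpa using Set.uIcc_subset_Icc hp hq hy
  have s1 := intervalIntegral.integral_add_adjacent_intervals
    (keyH a.re c.re a.im har hcr hai) (keyH c.re b.re a.im hcr hbr hai)
  have s2 := intervalIntegral.integral_add_adjacent_intervals
    (keyH a.re c.re b.im har hcr hbi) (keyH c.re b.re b.im hcr hbr hbi)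
  have s3 := intervalIntegral.integral_add_adjacent_intervals
    (keyV a.im c.im a.re hai hci har) (keyV c.im b.im a.re hci hbi har)
  have s4 := intervalIntegral.integral_add_adjacent_intervals
    (keyV a.im c.im b.re hai hci hbr) (keyV c.im b.im b.re hci hbi hbr)
  simp only [rectangleIntegral, Complex.add_re, Complex.add_im, Complex.ofReal_re,
    Complex.ofReal_im, Complex.mul_re, Complex.mul_im, Complex.I_re, Complex.I_im,
    mul_zero, mul_one, zero_mul, one_mul, zero_add, add_zero, sub_zero, zero_sub, neg_neg]
  rw [← s1, ← s2, ← s3, ← s4]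
  simp only [smul_add]
  abel
end

section
/- Let n, k ≥ 1 and suppose T : ℂ → Matrix (Fin n) (Fin n) ℂ has Keldysh form on the disk D(c, r) with data (U, H, λ, v, w). Let V : Matrix (Fin n) (Fin k) ℂ be the matrix with columns v_1, …, v_k and W : Matrix (Fin n) (Fin k) ℂ the matrix with columns w_1, …, w_k, and assume both V and W have rank k. Then for volume-almost every z ∈ ℂⁿ (with respect to the Lebesgue measure on ℂⁿ), (1/(2πi)) · ∮_{|ξ−c|=r} T(ξ)⁻¹ ·ᵥ z dξ ≠ 0. (This is the correctness of the recursive integral method's indicator: when the disk contains at least one eigenvalue, the contour integral of T(ξ)⁻¹ z is nonzero for almost any probing vector z.) -/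
open Complex MeasureTheory Matrix

attribute [local instance] Matrix.normedAddCommGroup Matrix.normedSpace

section Aux
variable {E : Type*} [NormedAddCommGroup E] [NormedSpace ℂ E]

private lemma myCircleIntegral_add {f g : ℂ → E} {c : ℂ} {R : ℝ}
    (hf : CircleIntegrable f c R) (hg : CircleIntegrable g c R) :
    (∮ ξ in C(c, R), (f ξ + g ξ)) = (∮ ξ in C(c, R), f ξ) + ∮ ξ in C(c, R), g ξ := by
  simp only [circleIntegral, smul_add]
  exact intervalIntegral.integral_add hf.out hg.out

private lemma myCircleIntegral_sum {ι : Type*} (s : Finset ι) (f : ι → ℂ → E) {c : ℂ} {R : ℝ}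
    (h : ∀ i ∈ s, CircleIntegrable (f i) c R) :
    (∮ ξ in C(c, R), ∑ i ∈ s, f i ξ) = ∑ i ∈ s, ∮ ξ in C(c, R), f i ξ := by
  simp only [circleIntegral, Finset.smul_sum]
  exact intervalIntegral.integral_finset_sum fun i hi => (h i hi).out

private lemma myCircleIntegrable_sum {ι : Type*} (s : Finset ι) (f : ι → ℂ → E) {c : ℂ} {R : ℝ}
    (h : ∀ i ∈ s, CircleIntegrable (f i) c R) :
    CircleIntegrable (fun ξ => ∑ i ∈ s, f i ξ) c R := by
  have h2 := IntervalIntegrable.sum s (μ := volume) (a := 0) (b := 2 * Real.pi)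
    (f := fun i θ => f i (circleMap c R θ)) h
  have h3 : (∑ i ∈ s, fun θ => f i (circleMap c R θ))
      = fun θ => ∑ i ∈ s, f i (circleMap c R θ) := by
    funext θ; simp
  rw [h3] at h2
  exact h2

private lemma mySum_mulVec {m l R : Type*} [Fintype l] [CommRing R] {ι : Type*} (s : Finset ι)
    (A : ι → Matrix m l R) (x : l → R) :
    (∑ i ∈ s, A i) *ᵥ x = ∑ i ∈ s, A i *ᵥ x := by
  classical
  induction s using Finset.induction with
  | empty => simp [Matrix.mulVec, dotProduct]
  | insert _ _ hni ih => simp [Finset.sum_insert hni, Matrix.add_mulVec, ih]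

end Aux

/-- Correctness of the RIM indicator: if `T` has Keldysh form on the disk `D(c, r)` with data
`(U, H, lam, v, w)` and both eigenvector matrices `V`, `W` have full column rank `k ≥ 1`, then
for almost every probing vector `z`, the contour integral `(2πi)⁻¹ ∮ T(ξ)⁻¹ z dξ` is nonzero. -/
theorem rim_indicator_ae_ne_zero
    (n k : ℕ) (hn : 1 ≤ n) (hk : 1 ≤ k)
    (T H : ℂ → Matrix (Fin n) (Fin n) ℂ) (c : ℂ) (r : ℝ) (hr : 0 < r)
    (U : Set ℂ) (hU : IsOpen U) (hUc : Metric.closedBall c r ⊆ U)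
    (hH : DifferentiableOn ℂ H U)
    (lam : Fin k → ℂ) (hlam_inj : Function.Injective lam)
    (hlam_mem : ∀ i, lam i ∈ Metric.ball c r)
    (v w : Fin k → Fin n → ℂ)
    (hT : ∀ ξ ∈ U, ξ ∉ Set.range lam →
      IsUnit (T ξ) ∧
      (T ξ)⁻¹ = H ξ +
        ∑ i, (ξ - lam i)⁻¹ • Matrix.vecMulVec (v i) (fun q => (starRingEnd ℂ) (w i q)))
    (V W : Matrix (Fin n) (Fin k) ℂ)
    (hV_col : ∀ i p, V p i = v i p) (hW_col : ∀ i p, W p i = w i p)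
    (hV : V.rank = k) (hW : W.rank = k) :
    ∀ᵐ z ∂(volume : Measure (Fin n → ℂ)),
      (2 * (Real.pi : ℂ) * Complex.I)⁻¹ • (∮ ξ in C(c, r), (T ξ)⁻¹ *ᵥ z) ≠ 0 := by
  classical
  have hpi : (2 * (Real.pi : ℂ) * Complex.I) ≠ 0 := by
    simp [Real.pi_ne_zero, Complex.I_ne_zero, Complex.ofReal_ne_zero]
  set M : Fin k → Matrix (Fin n) (Fin n) ℂ :=
    fun i => Matrix.vecMulVec (v i) (fun q => (starRingEnd ℂ) (w i q)) with hM
  have hsphere_sub : Metric.sphere c r ⊆ U :=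
    fun ξ hξ => hUc (Metric.sphere_subset_closedBall hξ)
  have hsphere_nlam : ∀ ξ ∈ Metric.sphere c r, ξ ∉ Set.range lam := by
    rintro ξ hξ ⟨i, rfl⟩
    have h1 := Metric.mem_ball.mp (hlam_mem i)
    have h2 := Metric.mem_sphere.mp hξ
    exact absurd h2 (ne_of_lt h1)
  have hsphere_ne : ∀ ξ ∈ Metric.sphere c r, ∀ i, ξ - lam i ≠ 0 := by
    intro ξ hξ i h0
    exact hsphere_nlam ξ hξ ⟨i, by linear_combination -h0⟩
  -- entrywise differentiability of H
  have hHe : ∀ p q, DifferentiableOn ℂ (fun ξ => H ξ p q) U := by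
    intro p q
    exact differentiableOn_pi.mp (differentiableOn_pi.mp hH p) q
  -- the key deterministic identity
  have key : ∀ z : Fin n → ℂ,
      (∮ ξ in C(c, r), (T ξ)⁻¹ *ᵥ z)
        = (2 * (Real.pi : ℂ) * Complex.I) • (V *ᵥ (Wᴴ *ᵥ z)) := by
    intro z
    have hHz : DifferentiableOn ℂ (fun ξ => H ξ *ᵥ z) U := by
      refine differentiableOn_pi.mpr fun p => ?_
      have : (fun ξ => (H ξ *ᵥ z) p) = fun ξ => ∑ q, H ξ p q * z q := by
        funext ξ; simp [Matrix.mulVec, dotProduct]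
      rw [this]
      exact DifferentiableOn.fun_sum fun q _ => (hHe p q).mul_const _
    have hintH : CircleIntegrable (fun ξ => H ξ *ᵥ z) c r :=
      ((hHz.continuousOn).mono hsphere_sub).circleIntegrable hr.le
    have hinti : ∀ i : Fin k,
        CircleIntegrable (fun ξ => (ξ - lam i)⁻¹ • (M i *ᵥ z)) c r := by
      intro i
      refine (ContinuousOn.fun_smul ?_ continuousOn_const).circleIntegrable hr.le
      exact ((continuousOn_id.sub continuousOn_const).inv₀ fun ξ hξ => hsphere_ne ξ hξ i)
    have hEq : Set.EqOn (fun ξ => (T ξ)⁻¹ *ᵥ z)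
        (fun ξ => (H ξ *ᵥ z) + ∑ i, (ξ - lam i)⁻¹ • (M i *ᵥ z)) (Metric.sphere c r) := by
      intro ξ hξ
      have h2 := (hT ξ (hsphere_sub hξ) (hsphere_nlam ξ hξ)).2
      simp only [h2, Matrix.add_mulVec, mySum_mulVec, Matrix.smul_mulVec, hM]
    have hzero : (∮ ξ in C(c, r), H ξ *ᵥ z) = 0 := by
      refine circleIntegral_eq_zero_of_differentiable_on_off_countable hr.le
        Set.countable_empty ((hHz.continuousOn).mono hUc) fun ξ hξ => ?_
      exact hHz.differentiableAt
        (hU.mem_nhds (hUc (Metric.ball_subset_closedBall hξ.1)))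
    calc (∮ ξ in C(c, r), (T ξ)⁻¹ *ᵥ z)
        = ∮ ξ in C(c, r), ((H ξ *ᵥ z) + ∑ i, (ξ - lam i)⁻¹ • (M i *ᵥ z)) :=
          circleIntegral.integral_congr hr.le hEq
      _ = (∮ ξ in C(c, r), H ξ *ᵥ z)
          + ∑ i, ∮ ξ in C(c, r), (ξ - lam i)⁻¹ • (M i *ᵥ z) := by
          rw [myCircleIntegral_add hintH (myCircleIntegrable_sum _ _ fun i _ => hinti i),
            myCircleIntegral_sum _ _ fun i _ => hinti i]
      _ = ∑ i, (2 * (Real.pi : ℂ) * Complex.I) • (M i *ᵥ z) := by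
          rw [hzero, zero_add]
          refine Finset.sum_congr rfl fun i _ => ?_
          rw [circleIntegral.integral_smul_const,
            circleIntegral.integral_sub_inv_of_mem_ball (hlam_mem i)]
      _ = (2 * (Real.pi : ℂ) * Complex.I) • (V *ᵥ (Wᴴ *ᵥ z)) := by
          rw [← Finset.smul_sum]
          congr 1
          ext p
          simp only [Finset.sum_apply, Matrix.mulVec, dotProduct, hM,
            Matrix.vecMulVec_apply, Matrix.conjTranspose_apply, hV_col, hW_col,
            Finset.mul_sum]
          have hterm : ∀ x : Fin k, ∑ i, v x p * (star (w x i) * z i)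
              = ∑ i, v x p * (starRingEnd ℂ) (w x i) * z i :=
            fun x => Finset.sum_congr rfl fun i _ => by
              simp only [starRingEnd_apply]; ring
          simp_rw [hterm]
  -- injectivity of V
  have hVker : LinearMap.ker V.mulVecLin = ⊥ := by
    have h1 := LinearMap.finrank_range_add_finrank_ker V.mulVecLin
    rw [show Module.finrank ℂ (LinearMap.range V.mulVecLin) = k from hV,
      Module.finrank_fin_fun] at h1
    exact Submodule.finrank_eq_zero.mp (by omega)
  have hVinj : Function.Injective V.mulVecLin := LinearMap.ker_eq_bot.mp hVker
  -- kernel of Wᴴ is a proper subspace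
  set K : Submodule ℝ (Fin n → ℂ) := (LinearMap.ker (Wᴴ).mulVecLin).restrictScalars ℝ with hK
  have hKne : K ≠ ⊤ := by
    intro htop
    have hall : ∀ z : Fin n → ℂ, Wᴴ *ᵥ z = 0 := by
      intro z
      have := Submodule.eq_top_iff'.mp htop z
      simpa [hK, LinearMap.mem_ker, Matrix.mulVecLin_apply] using this
    have hrange : LinearMap.range (Wᴴ).mulVecLin = ⊥ :=
      LinearMap.range_eq_bot.mpr
        (LinearMap.ext fun z => by simp [Matrix.mulVecLin_apply, hall z])
    have hzero : (Wᴴ).rank = 0 := by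
      rw [Matrix.rank, hrange, finrank_bot]
    open scoped ComplexOrder in
    rw [Matrix.rank_conjTranspose, hW] at hzero
    omega
  have hK0 : (volume : Measure (Fin n → ℂ)) (K : Set (Fin n → ℂ)) = 0 :=
    Measure.addHaar_submodule _ K hKne
  have hae : ∀ᵐ z ∂(volume : Measure (Fin n → ℂ)), z ∉ (K : Set (Fin n → ℂ)) :=
    measure_eq_zero_iff_ae_notMem.mp hK0
  refine hae.mono fun z hz hcontra => ?_
  rw [key z, smul_smul, inv_mul_cancel₀ hpi, one_smul] at hcontra
  have hWz : Wᴴ *ᵥ z = 0 := by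
    have : V.mulVecLin (Wᴴ *ᵥ z) = V.mulVecLin 0 := by
      simp [Matrix.mulVecLin_apply, hcontra]
    exact hVinj this
  exact hz (by simp [hK, LinearMap.mem_ker, Matrix.mulVecLin_apply, hWz])
end
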